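/- Let k be a positive integer and let G be a finite k-connected simple graph with n(G) > k vertices and maximum degree Δ(G) ≥ 2. Then F_k(G) ≤ ((Δ(G) − 2)·n(G) + 2) / (Δ(G) + k − 2). -/

import Mathlib

/-- One step of the `k`-forcing color change process: a colored vertex (in `S`)
with at most `k` non-colored neighbors causes all of its neighbors to become colored. -/
def kStep {V : Type*} [Fintype V] [DecidableEq V] (G : SimpleGraph V) [DecidableRel G.Adj]
    (k : ℕ) (S : Finset V) : Finset V :=
  S ∪ Finset.univ.filter (fun v => ∃ u ∈ S, G.Adj u v ∧ (G.neighborFinset u \ S).card ≤ k)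

/-- `S` is a `k`-forcing set if iterating the color change rule starting from `S`
eventually colors all vertices of `G`. -/
def IsKForcingSet {V : Type*} [Fintype V] [DecidableEq V] (G : SimpleGraph V)
    [DecidableRel G.Adj] (k : ℕ) (S : Finset V) : Prop :=
  ∃ n : ℕ, (kStep G k)^[n] S = Finset.univ

/-- The `k`-forcing number `F_k(G)`: the minimum cardinality of a `k`-forcing set. -/
noncomputable def kForcingNumber {V : Type*} [Fintype V] [DecidableEq V] (G : SimpleGraph V)
    [DecidableRel G.Adj] (k : ℕ) : ℕ :=
  sInf {m | ∃ S : Finset V, S.card = m ∧ IsKForcingSet G k S}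

/-- `G` is `k`-connected: it has more than `k` vertices and remains connected after
deleting any set of fewer than `k` vertices. -/
def IsKConnected {V : Type*} [Fintype V] (G : SimpleGraph V) (k : ℕ) : Prop :=
  k < Fintype.card V ∧
    ∀ A : Finset V, A.card < k → (G.induce ((↑A : Set V)ᶜ)).Connected

/-!
Colour a vertex `v` of maximum degree `Δ` together with `Δ - k` of its neighbours; then `v` forces
the rest of its neighbourhood. Afterwards, as long as some coloured vertex `u` has `t ≥ 1`
uncoloured neighbours, colour `t - k` of them and let `u` force the others. Every coloured vertex
keeps a coloured neighbour, so `t ≤ Δ - 1`, and then `(t - k)(Δ + k - 2) ≤ (Δ - 2) t`: each vertex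
coloured after the first step costs at most `(Δ - 2) / (Δ + k - 2)`. Connectivity guarantees that
the process only stops once every vertex is coloured.
-/

open Finset

theorem cast_sub_mul_add_sub_two_le {t k d : ℕ} (hk : 1 ≤ k) (htd : t < d) :
    ((t - k : ℕ) : ℝ) * (d + k - 2) ≤ (d - 2) * t := by
  rcases Nat.eq_zero_or_pos t with rfl | ht
  · simp
  have hk' : (1 : ℝ) ≤ k := by exact_mod_cast hk
  have ht' : (1 : ℝ) ≤ t := by exact_mod_cast ht
  have htd' : (t : ℝ) + 1 ≤ d := by exact_mod_cast htd
  rcases le_total t k with htk | hkt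
  · rw [Nat.sub_eq_zero_of_le htk, Nat.cast_zero, zero_mul]
    exact mul_nonneg (by linarith) (Nat.cast_nonneg t)
  · rw [Nat.cast_sub hkt]
    nlinarith

theorem card_compl_union_add_card_sdiff {α : Type*} [Fintype α] [DecidableEq α] (s t : Finset α) :
    (s ∪ t)ᶜ.card + (t \ s).card = sᶜ.card := by
  have hunion : (s ∪ t).card = s.card + (t \ s).card := by
    rw [← union_sdiff_self_eq_union, card_union_of_disjoint disjoint_sdiff]
  have := card_le_univ (s ∪ t)
  rw [card_compl, card_compl]
  omega

theorem cast_sub_add_one_mul_add_sub_two_le {k d : ℕ} (hk : 1 ≤ k) (hkd : k ≤ d) :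
    ((d - k + 1 : ℕ) : ℝ) * (d + k - 2) ≤ (d - 2) * (d + 1) + 2 := by
  rw [Nat.cast_add_one, Nat.cast_sub hkd]
  -- the two sides differ by `(k - 1)(k - 2)`, which is nonnegative as `k` is an integer
  have hk_int : (0 : ℝ) ≤ (k - 1) * (k - 2) := by
    rcases Nat.lt_or_ge k 2 with hk2 | hk2
    · obtain rfl : k = 1 := by omega
      norm_num
    · have : (2 : ℝ) ≤ k := by exact_mod_cast hk2
      nlinarith
  linarith

section Forcing

variable {V : Type*} [Fintype V] [DecidableEq V] {G : SimpleGraph V} [DecidableRel G.Adj] {k : ℕ}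

theorem card_neighborFinset_sdiff_lt_maxDegree {B : Finset V} {u w : V} (hw : w ∈ B)
    (huw : G.Adj u w) : (G.neighborFinset u \ B).card < G.maxDegree := by
  have hsub : G.neighborFinset u \ B ⊂ G.neighborFinset u :=
    (ssubset_iff_of_subset sdiff_subset).mpr ⟨w, (G.mem_neighborFinset u w).mpr huw, by simp [hw]⟩
  calc (G.neighborFinset u \ B).card < G.degree u :=
        G.card_neighborFinset_eq_degree u ▸ card_lt_card hsub
    _ ≤ G.maxDegree := G.degree_le_maxDegree u

theorem subset_kStep (S : Finset V) : S ⊆ kStep G k S := subset_union_left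

theorem monotone_kStep : Monotone (kStep G k) := by
  intro S T hST x hx
  simp only [kStep, mem_union, mem_filter, mem_univ, true_and] at hx ⊢
  rcases hx with hx | ⟨u, hu, hadj, hcard⟩
  · exact .inl (hST hx)
  · exact .inr ⟨u, hST hu, hadj, (card_le_card (sdiff_subset_sdiff le_rfl hST)).trans hcard⟩

theorem IsKForcingSet.mono {S T : Finset V} (hST : S ⊆ T) (hS : IsKForcingSet G k S) :
    IsKForcingSet G k T := by
  obtain ⟨m, hm⟩ := hS
  exact ⟨m, univ_subset_iff.mp (hm ▸ monotone_kStep.iterate m hST)⟩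

theorem IsKForcingSet.of_subset_kStep {S T : Finset V} (hT : IsKForcingSet G k T)
    (hTS : T ⊆ kStep G k S) : IsKForcingSet G k S := by
  obtain ⟨m, hm⟩ := hT.mono hTS
  exact ⟨m + 1, by rwa [Function.iterate_succ_apply]⟩

theorem kForcingNumber_le_card {S : Finset V} (hS : IsKForcingSet G k S) :
    kForcingNumber G k ≤ S.card :=
  Nat.sInf_le ⟨S, rfl, hS⟩

theorem neighborFinset_subset_kStep {S : Finset V} {u : V} (hu : u ∈ S)
    (hcard : (G.neighborFinset u \ S).card ≤ k) : G.neighborFinset u ⊆ kStep G k S := by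
  intro x hx
  refine mem_union_right _ (mem_filter.mpr ⟨mem_univ x, u, hu, ?_, hcard⟩)
  exact (G.mem_neighborFinset u x).mp hx

theorem exists_subset_neighborFinset_sdiff_forcing {B : Finset V} {u : V} (hu : u ∈ B) :
    ∃ T ⊆ G.neighborFinset u \ B, T.card = (G.neighborFinset u \ B).card - k ∧
      B ∪ G.neighborFinset u ⊆ kStep G k (B ∪ T) := by
  obtain ⟨T, hTU, hT⟩ := exists_subset_card_eq (Nat.sub_le (G.neighborFinset u \ B).card k)
  refine ⟨T, hTU, hT, union_subset ?_ (neighborFinset_subset_kStep (mem_union_left T hu) ?_)⟩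
  · exact subset_union_left.trans (subset_kStep _)
  · have hdiff : G.neighborFinset u \ (B ∪ T) = (G.neighborFinset u \ B) \ T :=
      sdiff_sdiff_left.symm
    rw [hdiff, card_sdiff_of_subset hTU, hT]
    omega

theorem forall_exists_adj_union_neighborFinset {B : Finset V} {u : V} (hu : u ∈ B)
    (hB : ∀ x ∈ B, ∃ w ∈ B ∪ G.neighborFinset u, G.Adj x w) :
    ∀ x ∈ B ∪ G.neighborFinset u, ∃ w ∈ B ∪ G.neighborFinset u, G.Adj x w := by
  intro x hx
  rcases mem_union.mp hx with hx | hx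
  · exact hB x hx
  · exact ⟨u, mem_union_left _ hu, ((G.mem_neighborFinset u x).mp hx).symm⟩

theorem SimpleGraph.Connected.exists_neighborFinset_sdiff_nonempty (hG : G.Connected)
    {B : Finset V} (hB : B.Nonempty) (hBu : B ≠ univ) :
    ∃ u ∈ B, (G.neighborFinset u \ B).Nonempty := by
  obtain ⟨b, hb⟩ := hB
  obtain ⟨y, hy⟩ : ∃ y, y ∉ B := by simpa [eq_univ_iff_forall] using hBu
  obtain ⟨d, -, hdB, hdB'⟩ := (hG.preconnected b y).some.exists_boundary_dart (B : Set V) hb hy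
  exact ⟨d.fst, hdB, d.snd, mem_sdiff.mpr ⟨(G.mem_neighborFinset _ _).mpr d.adj, hdB'⟩⟩

theorem exists_isKForcingSet_union_card_mul_le (hk : 1 ≤ k) (hG : G.Connected) (B : Finset V)
    (hB : B.Nonempty) (hBadj : ∀ u ∈ B, ∃ w ∈ B, G.Adj u w) :
    ∃ T : Finset V, IsKForcingSet G k (B ∪ T) ∧
      (T.card : ℝ) * (G.maxDegree + k - 2) ≤ (G.maxDegree - 2) * Bᶜ.card := by
  by_cases hBu : B = univ
  · exact ⟨∅, ⟨0, by simp [hBu]⟩, by simp [hBu]⟩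
  obtain ⟨u, hu, v, hv⟩ := hG.exists_neighborFinset_sdiff_nonempty hB hBu
  set N := G.neighborFinset u
  set t := (N \ B).card
  have ht_pos : 0 < t := card_pos.mpr ⟨v, hv⟩
  have ht_lt : t < G.maxDegree := by
    obtain ⟨w, hwB, huw⟩ := hBadj u hu
    exact card_neighborFinset_sdiff_lt_maxDegree hwB huw
  obtain ⟨T₀, -, hT₀card, hstep⟩ := exists_subset_neighborFinset_sdiff_forcing (G := G) (k := k) hu
  have hcompl : (B ∪ N)ᶜ.card + t = Bᶜ.card := card_compl_union_add_card_sdiff B N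
  have hBNadj : ∀ x ∈ B ∪ N, ∃ w ∈ B ∪ N, G.Adj x w :=
    forall_exists_adj_union_neighborFinset hu fun x hx ↦
      (hBadj x hx).imp fun _ ⟨hw, hxw⟩ ↦ ⟨mem_union_left _ hw, hxw⟩
  obtain ⟨T', hT', hT'card⟩ :=
    exists_isKForcingSet_union_card_mul_le hk hG (B ∪ N) (hB.mono subset_union_left) hBNadj
  refine ⟨T₀ ∪ T', hT'.of_subset_kStep ?_, ?_⟩
  · rw [← union_assoc]
    exact union_subset (hstep.trans (monotone_kStep subset_union_left))
      (subset_union_right.trans (subset_kStep _))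
  have hΔk : (0 : ℝ) ≤ G.maxDegree + k - 2 := by
    have : (2 : ℝ) ≤ G.maxDegree + k := by exact_mod_cast (by omega : 2 ≤ G.maxDegree + k)
    linarith
  calc ((T₀ ∪ T').card : ℝ) * (G.maxDegree + k - 2)
      ≤ ((T₀.card + T'.card : ℕ) : ℝ) * (G.maxDegree + k - 2) := by
        gcongr
        exact card_union_le T₀ T'
    _ ≤ (G.maxDegree - 2) * t + (G.maxDegree - 2) * (B ∪ N)ᶜ.card := by
        rw [Nat.cast_add, add_mul, hT₀card]
        exact add_le_add (cast_sub_mul_add_sub_two_le hk ht_lt) hT'card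
    _ = (G.maxDegree - 2) * Bᶜ.card := by
        rw [← hcompl, Nat.cast_add]
        ring
termination_by Bᶜ.card
decreasing_by exact hcompl ▸ Nat.lt_add_of_pos_right ht_pos

end Forcing

section Connectivity

variable {V : Type*} [Fintype V] {G : SimpleGraph V} {k : ℕ}

theorem IsKConnected.connected (hk : 1 ≤ k) (h : IsKConnected G k) : G.Connected := by
  have hempty := h.2 ∅ (by rwa [card_empty])
  rw [coe_empty, Set.compl_empty] at hempty
  exact G.induceUnivIso.connected_iff.mp hempty

/-- Deleting the neighbours of `v` would isolate `v` from the vertices outside its closed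
neighbourhood, which exist because `n(G) > k`. -/
theorem IsKConnected.le_degree [DecidableRel G.Adj] (h : IsKConnected G k) (v : V) :
    k ≤ G.degree v := by
  classical
  by_contra! hlt
  set A := G.neighborFinset v
  have hvA : v ∉ A := G.notMem_neighborFinset_self v
  obtain ⟨w, hw, hwv⟩ : ∃ w ∈ Aᶜ, w ≠ v := by
    refine exists_mem_ne ?_ v
    rw [card_compl, G.card_neighborFinset_eq_degree]
    have := h.1
    omega
  have hconn := h.2 A (by rwa [G.card_neighborFinset_eq_degree])
  obtain ⟨x, hx⟩ := (hconn.preconnected ⟨v, hvA⟩ ⟨w, by simpa using hw⟩).nonempty_neighborSet_left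
    (by simpa using hwv.symm)
  exact x.2 (by simpa [A] using hx)

end Connectivity

section Bound

variable {V : Type*} [Fintype V] [DecidableEq V] {G : SimpleGraph V} [DecidableRel G.Adj] {k : ℕ}

theorem exists_card_le_degree_sub_add_one_subset_kStep (v : V) :
    ∃ S : Finset V, S.card ≤ G.degree v - k + 1 ∧ {v} ∪ G.neighborFinset v ⊆ kStep G k S := by
  obtain ⟨T, -, hTcard, hstep⟩ :=
    exists_subset_neighborFinset_sdiff_forcing (G := G) (k := k) (mem_singleton_self v)
  rw [sdiff_singleton_eq_erase, erase_eq_of_notMem (G.notMem_neighborFinset_self v),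
    G.card_neighborFinset_eq_degree] at hTcard
  refine ⟨{v} ∪ T, ?_, hstep⟩
  have := card_union_le {v} T
  rw [card_singleton, hTcard] at this
  omega

theorem exists_isKForcingSet_card_mul_le (hk : 1 ≤ k) (hG : G.Connected)
    (hkΔ : k ≤ G.maxDegree) :
    ∃ S : Finset V, IsKForcingSet G k S ∧
      (S.card : ℝ) * (G.maxDegree + k - 2) ≤ (G.maxDegree - 2) * Fintype.card V + 2 := by
  have := hG.nonempty
  obtain ⟨v, hv⟩ := G.exists_maximal_degree_vertex
  set N := G.neighborFinset v
  have hNcard : N.card = G.maxDegree := by rw [G.card_neighborFinset_eq_degree, hv]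
  obtain ⟨S₀, hS₀card, hstep⟩ := exists_card_le_degree_sub_add_one_subset_kStep (G := G) (k := k) v
  rw [← hv] at hS₀card
  have hBadj : ∀ x ∈ {v} ∪ N, ∃ w ∈ {v} ∪ N, G.Adj x w := by
    obtain ⟨w, hw⟩ : N.Nonempty := card_pos.mp (by omega)
    refine forall_exists_adj_union_neighborFinset (mem_singleton_self v) fun x hx ↦ ?_
    exact ⟨w, mem_union_right _ hw, mem_singleton.mp hx ▸ (G.mem_neighborFinset v w).mp hw⟩
  obtain ⟨T, hT, hTcard⟩ := exists_isKForcingSet_union_card_mul_le hk hG ({v} ∪ N)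
    ⟨v, mem_union_left _ (mem_singleton_self v)⟩ hBadj
  refine ⟨S₀ ∪ T, hT.of_subset_kStep ?_, ?_⟩
  · exact union_subset (hstep.trans (monotone_kStep subset_union_left))
      (subset_union_right.trans (subset_kStep _))
  have hcompl : ({v} ∪ N)ᶜ.card + (G.maxDegree + 1) = Fintype.card V := by
    have := card_compl_union_add_card_sdiff {v} N
    rw [sdiff_singleton_eq_erase, erase_eq_of_notMem (G.notMem_neighborFinset_self v), hNcard,
      card_compl {v}, card_singleton] at this
    have := Fintype.card_pos (α := V)
    omega
  calc ((S₀ ∪ T).card : ℝ) * (G.maxDegree + k - 2)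
      ≤ ((G.maxDegree - k + 1 + T.card : ℕ) : ℝ) * (G.maxDegree + k - 2) := by
        gcongr
        · have : (1 : ℝ) ≤ k := by exact_mod_cast hk
          have : (k : ℝ) ≤ G.maxDegree := by exact_mod_cast hkΔ
          linarith
        · exact (card_union_le _ _).trans (by omega)
    _ ≤ (G.maxDegree - 2) * (G.maxDegree + 1) + 2 + (G.maxDegree - 2) * ({v} ∪ N)ᶜ.card := by
        rw [Nat.cast_add, add_mul]
        exact add_le_add (cast_sub_add_one_mul_add_sub_two_le hk hkΔ) hTcard
    _ = (G.maxDegree - 2) * Fintype.card V + 2 := by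
        rw [← hcompl]
        push_cast
        ring

end Bound

theorem kForcingNumber_le_of_isKConnected_general {V : Type*} [Fintype V] [DecidableEq V]
    (G : SimpleGraph V) [DecidableRel G.Adj] (k : ℕ) (hk : 1 ≤ k)
    (hkconn : IsKConnected G k) (hΔ : 2 ≤ G.maxDegree) :
    (kForcingNumber G k : ℝ) ≤
      (((G.maxDegree : ℝ) - 2) * (Fintype.card V) + 2) / ((G.maxDegree : ℝ) + k - 2) := by
  have hG := hkconn.connected hk
  obtain ⟨v⟩ := hG.nonempty
  obtain ⟨S, hS, hScard⟩ := exists_isKForcingSet_card_mul_le hk hG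
    ((hkconn.le_degree v).trans (G.degree_le_maxDegree v))
  have hpos : (0 : ℝ) < G.maxDegree + k - 2 := by
    have : (2 : ℝ) ≤ G.maxDegree := by exact_mod_cast hΔ
    have : (1 : ℝ) ≤ k := by exact_mod_cast hk
    linarith
  rw [le_div_iff₀ hpos]
  calc (kForcingNumber G k : ℝ) * (G.maxDegree + k - 2)
      ≤ S.card * (G.maxDegree + k - 2) := by
        gcongr
        exact_mod_cast kForcingNumber_le_card hS
    _ ≤ _ := hScard

/-- If `G` is `k`-connected with `n(G) > k` vertices and `Δ(G) ≥ 2`, then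
`F_k(G) ≤ ((Δ-2)n + 2) / (Δ+k-2)`. -/
theorem kForcingNumber_le_of_isKConnected {V : Type*} [Fintype V] [DecidableEq V]
    (G : SimpleGraph V) [DecidableRel G.Adj] (k : ℕ) (hk : 1 ≤ k)
    (hkconn : IsKConnected G k) (hn : k < Fintype.card V) (hΔ : 2 ≤ G.maxDegree) :
    (kForcingNumber G k : ℝ) ≤
      (((G.maxDegree : ℝ) - 2) * (Fintype.card V) + 2) / ((G.maxDegree : ℝ) + k - 2) :=
  kForcingNumber_le_of_isKConnected_general G k hk hkconn hΔ
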